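/- If conditions M(λ_n) and S(λ_n) hold, then sup_{|s−t|≤δ_n} a_t(n/k_n)/a_s(n/k_n) = O(1) as n → ∞. -/

import Mathlib

open MeasureTheory Filter Topology Set

/-!
Write `Q = n / k`. Condition S says that above the threshold `U_t(Q) + τ a_t` the values at
nearby times `s, t` differ by more than `ε λ a_t` only on an event of probability `o(1 / Q)`.
Since the tail quantile at level `yQ` leaves mass `1 / (yQ)` above it, this gives
`U_t(yQ) - ε λ a_t ≤ U_s(2yQ)` whenever `U_t(yQ)` lies above the threshold. Because `τ < τ_max`
and `γ` is continuous on the compact `[0, 1]`, condition M puts `U_t(bQ)` above the threshold for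
one `b` and all `t`. Comparing the increments `U_u(8bQ) - U_u(2bQ)` and `U_s(16bQ) - U_s(bQ)`,
which condition M identifies with `a_u`, resp. `a_s`, times increments of `y ↦ (y^γ - 1)/γ`,
then bounds `a_u / a_s`. The identity `(y^γ - 1)/γ = ∫₁^y x^(γ-1) dx` makes these increments
monotone in `γ`, so that the constants are uniform in `t`.
-/

/-- `gfun y γ = (y^γ - 1)/γ`, read as `log y` for `γ = 0`. -/
noncomputable def gfun (y γ : ℝ) : ℝ := if γ = 0 then Real.log y else (y ^ γ - 1) / γ

lemma gfun_eq_integral {y : ℝ} (hy : 0 < y) (γ : ℝ) :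
    gfun y γ = ∫ x in (1 : ℝ)..y, x ^ (γ - 1) := by
  have h0 : (0 : ℝ) ∉ uIcc 1 y := notMem_uIcc_of_lt one_pos hy
  rcases eq_or_ne γ 0 with rfl | hγ
  · simp [gfun, Real.rpow_neg_one, integral_inv h0]
  · rw [integral_rpow (Or.inr ⟨by simpa [sub_eq_add_neg] using hγ, h0⟩)]
    simp [gfun, hγ]

lemma intervalIntegrable_rpow_of_pos {a y r : ℝ} (ha : 0 < a) (hy : 0 < y) :
    IntervalIntegrable (fun x : ℝ => x ^ r) volume a y :=
  intervalIntegral.intervalIntegrable_rpow (Or.inr (notMem_uIcc_of_lt ha hy))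

lemma gfun_sub_gfun {a y : ℝ} (ha : 0 < a) (hy : 0 < y) (γ : ℝ) :
    gfun y γ - gfun a γ = ∫ x in a..y, x ^ (γ - 1) := by
  rw [gfun_eq_integral hy, gfun_eq_integral ha,
    intervalIntegral.integral_interval_sub_left (intervalIntegrable_rpow_of_pos one_pos hy)
      (intervalIntegrable_rpow_of_pos one_pos ha)]

lemma strictMonoOn_gfun (γ : ℝ) : StrictMonoOn (fun y => gfun y γ) (Ioi 0) := by
  intro a ha y _ hay
  rw [← sub_pos, gfun_sub_gfun ha (ha.trans hay)]
  exact intervalIntegral.intervalIntegral_pos_of_pos_on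
    (intervalIntegrable_rpow_of_pos ha (ha.trans hay))
    (fun x hx => Real.rpow_pos_of_pos (ha.trans hx.1) _) hay

lemma gfun_sub_gfun_mono {a y γ γ' : ℝ} (ha : 1 ≤ a) (hay : a ≤ y) (hγ : γ ≤ γ') :
    gfun y γ - gfun a γ ≤ gfun y γ' - gfun a γ' := by
  have ha0 : 0 < a := by linarith
  have hy0 : 0 < y := ha0.trans_le hay
  rw [gfun_sub_gfun ha0 hy0, gfun_sub_gfun ha0 hy0]
  exact intervalIntegral.integral_mono_on hay (intervalIntegrable_rpow_of_pos ha0 hy0)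
    (intervalIntegrable_rpow_of_pos ha0 hy0)
    fun x hx => Real.rpow_le_rpow_of_exponent_le (ha.trans hx.1) (by linarith)

lemma gfun_one (γ : ℝ) : gfun 1 γ = 0 := by simp [gfun]

lemma gfun_mono {y : ℝ} (hy : 1 ≤ y) : Monotone (gfun y) := fun γ γ' hγ => by
  simpa [gfun_one] using gfun_sub_gfun_mono le_rfl hy hγ

lemma exists_add_le_gfun_of_margin {τ Γ c : ℝ} (hΓ : 0 < Γ) (hc : 0 < c) :
    ∃ b > 1, ∃ c₀ > 0, ∀ γ, -Γ ≤ γ → (γ < 0 → τ * -γ ≤ 1 - c) → τ + c₀ ≤ gfun b γ := by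
  set c' := min c 1
  have hc' : 0 < c' := lt_min hc one_pos
  set c₀ := c' / (2 * Γ)
  have hc₀ : 0 < c₀ := by positivity
  set β := 1 / (2 * (|τ| + c₀))
  have hβ : 0 < β := by positivity
  obtain ⟨b, hb, hbβ⟩ : ∃ b > 1, b ^ (-β) ≤ c' / 2 :=
    ((eventually_gt_atTop 1).and ((tendsto_rpow_neg_atTop hβ).eventually
      (eventually_le_nhds (by positivity)))).exists
  refine ⟨b, hb, c₀, hc₀, fun γ hΓγ hτγ => ?_⟩
  -- For `γ ≥ -β`, monotonicity in `γ` gives `gfun b γ ≥ (1 - b^(-β)) / β ≈ 1 / β`; for `γ < -β`,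
  -- `gfun b γ = (1 - b^γ) / (-γ)` with `b^γ` negligible against the margin `c`.
  rcases le_or_gt (-β) γ with hβγ | hγβ
  · have hc'1 : c' ≤ 1 := min_le_right _ _
    calc τ + c₀ ≤ (1 / 2) / β := by
          rw [div_div_eq_mul_div, div_one]; linarith [le_abs_self τ]
      _ ≤ (1 - b ^ (-β)) / β := by gcongr; linarith
      _ = gfun b (-β) := by
          rw [gfun, if_neg (neg_ne_zero.2 hβ.ne')]; ring
      _ ≤ gfun b γ := gfun_mono hb.le hβγ
  · have hγ : γ < 0 := by linarith
    have hbγ : b ^ γ ≤ c' / 2 := (Real.rpow_le_rpow_of_exponent_le hb.le hγβ.le).trans hbβ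
    have hc₀γ : c₀ * -γ ≤ c' / 2 := by
      calc c₀ * -γ ≤ c₀ * Γ := by gcongr; linarith
        _ = c' / 2 := by simp only [c₀]; field_simp
    rw [gfun, if_neg hγ.ne, le_div_iff_of_neg hγ]
    linarith [hτγ hγ, min_le_left c 1]

lemma IsCompact.exists_pos_forall_mul_neg_le {S : Set ℝ} (hS : IsCompact S) {τ : ℝ}
    (hτ : ∀ γ ∈ S, γ < 0 → τ < -1 / γ) : ∃ c > 0, ∀ γ ∈ S, γ < 0 → τ * -γ ≤ 1 - c := by
  rcases S.eq_empty_or_nonempty with rfl | hne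
  · exact ⟨1, one_pos, by simp⟩
  obtain ⟨γ₀, hγ₀, hmax⟩ := hS.exists_isMaxOn hne
    (by fun_prop : Continuous fun γ : ℝ => τ * max (-γ) 0).continuousOn
  have hlt : τ * max (-γ₀) 0 < 1 := by
    rcases lt_or_ge γ₀ 0 with hneg | hnonneg
    · rw [max_eq_left (neg_nonneg.2 hneg.le)]
      linarith [(lt_div_iff_of_neg hneg).1 (hτ γ₀ hγ₀ hneg)]
    · simp [max_eq_right (neg_nonpos.2 hnonneg)]
  refine ⟨1 - τ * max (-γ₀) 0, by linarith, fun γ hγ hneg => ?_⟩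
  have : τ * max (-γ) 0 ≤ τ * max (-γ₀) 0 := hmax hγ
  rw [max_eq_left (neg_nonneg.2 hneg.le)] at this
  linarith

lemma IsCompact.exists_add_le_gfun {S : Set ℝ} (hS : IsCompact S) {τ : ℝ}
    (hτ : ∀ γ ∈ S, γ < 0 → τ < -1 / γ) : ∃ b > 1, ∃ c₀ > 0, ∀ γ ∈ S, τ + c₀ ≤ gfun b γ := by
  obtain ⟨m, hm⟩ := hS.bddBelow
  obtain ⟨c, hc, hτc⟩ := hS.exists_pos_forall_mul_neg_le hτ
  obtain ⟨b, hb, c₀, hc₀, h⟩ :=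
    exists_add_le_gfun_of_margin (τ := τ) (lt_max_of_lt_right one_pos : 0 < max (-m) 1) hc
  refine ⟨b, hb, c₀, hc₀, fun γ hγ => h γ ?_ (hτc γ hγ)⟩
  linarith [hm hγ, le_max_left (-m) 1]

namespace ProbabilityTheory

noncomputable def lowerQuantile (μ : Measure ℝ) (p : ℝ) : ℝ := sInf {x | p ≤ cdf μ x}

/-- The tail quantile function `U(y) = F^←(1 - 1/y)` of extreme value theory. -/
noncomputable def tailQuantile (μ : Measure ℝ) (y : ℝ) : ℝ := lowerQuantile μ (1 - 1 / y)

variable {μ : Measure ℝ} {p : ℝ}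

lemma bddBelow_setOf_le_cdf (hp : 0 < p) : BddBelow {x | p ≤ cdf μ x} := by
  obtain ⟨m, hm⟩ := eventually_atBot.1 ((tendsto_cdf_atBot μ).eventually (eventually_lt_nhds hp))
  exact ⟨m, fun x hx => le_of_not_gt fun hxm => (hm x hxm.le).not_ge hx⟩

lemma nonempty_setOf_le_cdf (hp : p < 1) : {x | p ≤ cdf μ x}.Nonempty :=
  ((tendsto_cdf_atTop μ).eventually (eventually_ge_nhds hp)).exists

lemma le_cdf_lowerQuantile (hp : p < 1) : p ≤ cdf μ (lowerQuantile μ p) := by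
  refine ge_of_tendsto (((cdf μ).right_continuous _).mono Ioi_subset_Ici_self)
    (eventually_nhdsWithin_of_forall fun x hx => ?_)
  obtain ⟨y, hy, hyx⟩ := exists_lt_of_csInf_lt (nonempty_setOf_le_cdf hp) hx
  exact hy.trans (monotone_cdf μ hyx.le)

lemma cdf_lt_of_lt_lowerQuantile (hp : 0 < p) {x : ℝ} (hx : x < lowerQuantile μ p) :
    cdf μ x < p :=
  lt_of_not_ge fun h => hx.not_ge (csInf_le (bddBelow_setOf_le_cdf hp) h)

lemma measureReal_Ioi_lowerQuantile_le [IsProbabilityMeasure μ] (hp : p < 1) :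
    μ.real (Ioi (lowerQuantile μ p)) ≤ 1 - p := by
  rw [← compl_Iic, measureReal_compl measurableSet_Iic, probReal_univ, ← cdf_eq_real]
  linarith [le_cdf_lowerQuantile (μ := μ) hp]

lemma one_sub_le_measureReal_Ici_lowerQuantile [IsProbabilityMeasure μ] (hp : 0 < p) :
    1 - p ≤ μ.real (Ici (lowerQuantile μ p)) := by
  have hleft : Function.leftLim (cdf μ) (lowerQuantile μ p) ≤ p :=
    le_of_tendsto ((monotone_cdf μ).tendsto_leftLim _)
      (eventually_nhdsWithin_of_forall fun _ hx => (cdf_lt_of_lt_lowerQuantile hp hx).le)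
  have hIio : μ (Iio (lowerQuantile μ p)) =
      ENNReal.ofReal (Function.leftLim (cdf μ) (lowerQuantile μ p)) := by
    rw [← measure_cdf μ, (cdf μ).measure_Iio (tendsto_cdf_atBot μ), sub_zero, measure_cdf]
  have hleft0 : 0 ≤ Function.leftLim (cdf μ) (lowerQuantile μ p) :=
    (cdf_nonneg μ _).trans ((monotone_cdf μ).le_leftLim (sub_one_lt _))
  rw [← compl_Iio, measureReal_compl measurableSet_Iio, probReal_univ, measureReal_def, hIio,
    ENNReal.toReal_ofReal hleft0]
  linarith

variable {Ω : Type*} [MeasurableSpace Ω] {P : Measure Ω} [IsProbabilityMeasure P] {Z W : Ω → ℝ}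

lemma lowerQuantile_sub_le_lowerQuantile (hZ : Measurable Z) (hW : Measurable W) {p q θ η : ℝ}
    (hp : 0 < p) (hq : q < 1) (hθ : θ < lowerQuantile (P.map Z) p)
    (hB : P.real {ω | η < |W ω - Z ω| ∧ θ < Z ω} < q - p) :
    lowerQuantile (P.map Z) p - η ≤ lowerQuantile (P.map W) q := by
  have := Measure.isProbabilityMeasure_map (μ := P) hZ.aemeasurable
  have := Measure.isProbabilityMeasure_map (μ := P) hW.aemeasurable
  by_contra! h
  have hsub : Z ⁻¹' Ici (lowerQuantile (P.map Z) p) ⊆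
      W ⁻¹' Ioi (lowerQuantile (P.map W) q) ∪ {ω | η < |W ω - Z ω| ∧ θ < Z ω} := by
    intro ω (hω : _ ≤ Z ω)
    by_cases hηω : η < |W ω - Z ω|
    · exact Or.inr ⟨hηω, hθ.trans_le hω⟩
    · have := (abs_le.1 (not_lt.1 hηω)).1
      exact Or.inl (show _ < W ω by linarith)
  have hZq : 1 - p ≤ P.real (Z ⁻¹' Ici (lowerQuantile (P.map Z) p)) := by
    rw [← map_measureReal_apply hZ measurableSet_Ici]
    exact one_sub_le_measureReal_Ici_lowerQuantile hp
  have hWq : P.real (W ⁻¹' Ioi (lowerQuantile (P.map W) q)) ≤ 1 - q := by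
    rw [← map_measureReal_apply hW measurableSet_Ioi]
    exact measureReal_Ioi_lowerQuantile_le hq
  linarith [(measureReal_mono (μ := P) hsub).trans (measureReal_union_le _ _)]

lemma tailQuantile_sub_le_tailQuantile_two_mul (hZ : Measurable Z) (hW : Measurable W)
    {y θ η : ℝ} (hy : 1 < y) (hθ : θ < tailQuantile (P.map Z) y)
    (hB : P.real {ω | η < |W ω - Z ω| ∧ θ < Z ω} < 1 / (2 * y)) :
    tailQuantile (P.map Z) y - η ≤ tailQuantile (P.map W) (2 * y) := by
  have hy0 : 0 < y := one_pos.trans hy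
  refine lowerQuantile_sub_le_lowerQuantile hZ hW ?_ ?_ hθ ?_
  · rw [sub_pos, div_lt_one hy0]; exact hy
  · have : 0 < 1 / (2 * y) := by positivity
    linarith
  · convert hB using 1; field_simp; ring

lemma tailQuantile_map_eq (hZ : Measurable Z) (y : ℝ) :
    tailQuantile (P.map Z) y = sInf {x | 1 - 1 / y ≤ P.real {ω | Z ω ≤ x}} := by
  have := Measure.isProbabilityMeasure_map (μ := P) hZ.aemeasurable
  simp only [tailQuantile, lowerQuantile, cdf_eq_real, map_measureReal_apply hZ measurableSet_Iic]
  rfl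

end ProbabilityTheory

lemma sub_mul_le_and_le_add_mul_of_abs_div_sub_le {x a g e : ℝ} (ha : 0 < a)
    (h : |x / a - g| ≤ e) : (g - e) * a ≤ x ∧ x ≤ (g + e) * a := by
  obtain ⟨h₁, h₂⟩ := abs_le.1 h
  exact ⟨(le_div_iff₀ ha).1 (by linarith), (div_le_iff₀ ha).1 (by linarith)⟩

lemma add_mul_lt_of_abs_div_sub_le {x₀ x a g e τ : ℝ} (ha : 0 < a)
    (h : |(x - x₀) / a - g| ≤ e) (hτ : τ + e < g) : x₀ + τ * a < x := by
  have := (sub_mul_le_and_le_add_mul_of_abs_div_sub_le ha h).1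
  nlinarith

lemma exists_pos_forall_mul_le {ι : Type*} {f : ι → ℝ} (hf : ∃ C, ∀ i, f i ≤ C) {m : ℝ}
    (hm : 0 < m) : ∃ ε > 0, ∀ i, ε * f i ≤ m := by
  obtain ⟨C, hC⟩ := hf
  refine ⟨m / max C 1, by positivity, fun i => ?_⟩
  calc m / max C 1 * f i ≤ m / max C 1 * max C 1 := by
        gcongr; exact (hC i).trans (le_max_left _ _)
    _ = m := div_mul_cancel₀ _ (by positivity)

section FixedLevel

open ProbabilityTheory

variable {Ω : Type*} [MeasurableSpace Ω] {P : Measure Ω} [IsProbabilityMeasure P]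
  {X : Ω → ℝ → ℝ} {U : ℝ → ℝ → ℝ}

lemma sub_le_two_mul_of_measureReal_lt (hX : ∀ t, Measurable fun ω => X ω t)
    (hU : ∀ t y, U t y = tailQuantile (P.map fun ω => X ω t) y) {s u y a e θ : ℝ}
    (hy : 1 < y) (ha : 0 < a) (hθ : θ < U u y)
    (hB : P.real {ω | e < |X ω s - X ω u| / a ∧ θ < X ω u} < 1 / (2 * y)) :
    U u y - e * a ≤ U s (2 * y) := by
  simp_rw [lt_div_iff₀ ha] at hB
  simp only [hU] at hθ ⊢
  exact tailQuantile_sub_le_tailQuantile_two_mul (hX u) (hX s) hy hθ hB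

lemma sub_le_two_mul_of_level (hX : ∀ t, Measurable fun ω => X ω t)
    (hU : ∀ t y, U t y = tailQuantile (P.map fun ω => X ω t) y)
    {s u n k b y τ c₀ e ε' l a g : ℝ} (hk : 0 < k) (hkn : k ≤ n) (hb : 1 < b)
    (hy : y ∈ Icc b (8 * b)) (ha : 0 < a) (hg : τ + c₀ ≤ gfun b g) (he : e < c₀)
    (hM : |(U u (y * (n / k)) - U u (n / k)) / a - gfun y g| ≤ e)
    (hε' : ε' * l ≤ 1 / (32 * b))
    (hS : P.real {ω | e < |X ω s - X ω u| / a ∧ U u (n / k) + τ * a < X ω u} ≤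
      ε' * (l * k / n)) :
    U u (y * (n / k)) - e * a ≤ U s (2 * y * (n / k)) := by
  have hb0 : 0 < b := one_pos.trans hb
  have hQ : 1 ≤ n / k := (one_le_div hk).2 hkn
  have hQ0 : 0 < n / k := one_pos.trans_le hQ
  have hθ : U u (n / k) + τ * a < U u (y * (n / k)) :=
    add_mul_lt_of_abs_div_sub_le ha hM
      (by linarith [(strictMonoOn_gfun g).le_iff_le hb0 (hb0.trans_le hy.1) |>.2 hy.1])
  have hsmall : ε' * (l * k / n) < 1 / (2 * (y * (n / k))) :=
    calc ε' * (l * k / n) = ε' * l / (n / k) := by field_simp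
      _ ≤ 1 / (32 * b) / (n / k) := by gcongr
      _ < 1 / (2 * (y * (n / k))) := by
        rw [div_div]
        exact one_div_lt_one_div_of_lt (by have := hb0.trans_le hy.1; positivity)
          (by nlinarith [mul_le_mul_of_nonneg_right hy.2 hQ0.le, mul_pos hb0 hQ0])
  have := sub_le_two_mul_of_measureReal_lt hX hU (one_lt_mul_of_lt_of_le (hb.trans_le hy.1) hQ)
    ha hθ (hS.trans_lt hsmall)
  rwa [← mul_assoc] at this

lemma div_le_of_level (hX : ∀ t, Measurable fun ω => X ω t)
    (hU : ∀ t y, U t y = tailQuantile (P.map fun ω => X ω t) y) {γ a : ℝ → ℝ}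
    {s u n k b τ c₀ e ε' l c C : ℝ} (hk : 0 < k) (hkn : k ≤ n) (hb : 1 < b)
    (has : 0 < a s) (hau : 0 < a u) (hgs : τ + c₀ ≤ gfun b (γ s))
    (hgu : τ + c₀ ≤ gfun b (γ u)) (hc₀ : 0 < c₀) (hc : 0 < c) (he : e ≤ min (c₀ / 2) (c / 6))
    (hcu : c ≤ gfun (8 * b) (γ u) - gfun (2 * b) (γ u))
    (hCs : gfun (16 * b) (γ s) - gfun b (γ s) ≤ C)
    (hMs : ∀ y ∈ Icc b (16 * b), |(U s (y * (n / k)) - U s (n / k)) / a s - gfun y (γ s)| ≤ e)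
    (hMu : ∀ y ∈ Icc b (16 * b), |(U u (y * (n / k)) - U u (n / k)) / a u - gfun y (γ u)| ≤ e)
    (hε' : ε' * l ≤ 1 / (32 * b))
    (hSs : P.real {ω | e < |X ω u - X ω s| / a s ∧ U s (n / k) + τ * a s < X ω s} ≤
      ε' * (l * k / n))
    (hSu : P.real {ω | e < |X ω s - X ω u| / a u ∧ U u (n / k) + τ * a u < X ω u} ≤
      ε' * (l * k / n)) :
    a u / a s ≤ (C + c / 2) / (c / 2) := by
  have hb0 : 0 < b := one_pos.trans hb
  have he₀ : e < c₀ := by linarith [min_le_left (c₀ / 2) (c / 6)]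
  have he₁ : 6 * e ≤ c := by linarith [min_le_right (c₀ / 2) (c / 6)]
  have hmem : ∀ r : ℝ, 1 ≤ r → r ≤ 16 → r * b ∈ Icc b (16 * b) := fun r h₁ h₂ =>
    ⟨by nlinarith, by nlinarith⟩
  have hb_mem : b ∈ Icc b (16 * b) := ⟨le_rfl, by linarith⟩
  have h₁ : U u (8 * b * (n / k)) - e * a u ≤ U s (16 * b * (n / k)) := by
    have := sub_le_two_mul_of_level hX hU hk hkn hb ⟨by linarith, le_rfl⟩ hau hgu he₀
      (hMu _ (hmem 8 (by norm_num) (by norm_num))) hε' hSu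
    rwa [show 2 * (8 * b) = 16 * b by ring] at this
  have h₂ : U s (b * (n / k)) - e * a s ≤ U u (2 * b * (n / k)) :=
    sub_le_two_mul_of_level hX hU hk hkn hb ⟨le_rfl, by linarith⟩ has hgs he₀ (hMs _ hb_mem)
      hε' hSs
  obtain ⟨hu₈, -⟩ := sub_mul_le_and_le_add_mul_of_abs_div_sub_le hau
    (hMu _ (hmem 8 (by norm_num) (by norm_num)))
  obtain ⟨-, hu₂⟩ := sub_mul_le_and_le_add_mul_of_abs_div_sub_le hau
    (hMu _ (hmem 2 (by norm_num) (by norm_num)))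
  obtain ⟨hs₁, -⟩ := sub_mul_le_and_le_add_mul_of_abs_div_sub_le has (hMs _ hb_mem)
  obtain ⟨-, hs₁₆⟩ := sub_mul_le_and_le_add_mul_of_abs_div_sub_le has
    (hMs _ (hmem 16 (by norm_num) (by norm_num)))
  -- `h₁ + h₂` compares the increments `U_u(8bQ) - U_u(2bQ)` and `U_s(16bQ) - U_s(bQ)`.
  have hcomp : a u * (gfun (8 * b) (γ u) - gfun (2 * b) (γ u) - 3 * e) ≤
      a s * (gfun (16 * b) (γ s) - gfun b (γ s) + 3 * e) := by linarith
  have hu : a u * (c / 2) ≤ a u * (gfun (8 * b) (γ u) - gfun (2 * b) (γ u) - 3 * e) :=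
    mul_le_mul_of_nonneg_left (by linarith) hau.le
  have hs : a s * (gfun (16 * b) (γ s) - gfun b (γ s) + 3 * e) ≤ a s * (C + c / 2) :=
    mul_le_mul_of_nonneg_left (by linarith) has.le
  rw [div_le_div_iff₀ has (by positivity)]
  linarith

end FixedLevel

theorem scale_ratio_bounded_general
    {Ω : Type*} [MeasurableSpace Ω] (P : Measure Ω) [IsProbabilityMeasure P]
    (X : Ω → ℝ → ℝ)
    (hXmeas : ∀ s, Measurable fun ω => X ω s)
    (γ : ℝ → ℝ) (hγcont : ContinuousOn γ (Icc 0 1))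
    (F U : ℝ → ℝ → ℝ)
    (hF : ∀ s x, F s x = (P {ω | X ω s ≤ x}).toReal)
    (hU : ∀ s y, U s y = sInf {x : ℝ | 1 - 1 / y ≤ F s x})
    (A : ℕ → ℝ → ℝ) (hApos : ∀ n, ∀ s ∈ Icc (0:ℝ) 1, 0 < A n s)
    (k : ℕ → ℕ) (hk : ∀ n, 1 ≤ n → 1 ≤ k n ∧ k n ≤ n)
    (lam : ℕ → ℝ) (hlam_bdd : ∃ C, ∀ n, lam n ≤ C)
    (δ : ℕ → ℝ)
    -- the constant τ of condition S(λₙ): τ < τ_max = inf_t 1/γ_t⁻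
    (τ : ℝ) (hτ : ∀ s ∈ Icc (0:ℝ) 1, γ s < 0 → τ < -1 / γ s)
    -- condition M(λₙ)
    (hM : ∀ y₀ y₁ : ℝ, 0 < y₀ → y₀ < y₁ → ∀ ε > 0, ∀ᶠ n : ℕ in atTop,
      ∀ s ∈ Icc (0:ℝ) 1, ∀ y ∈ Icc y₀ y₁,
        |(U s (y * ((n : ℝ) / (k n : ℝ))) - U s ((n : ℝ) / (k n : ℝ))) / A n s
          - gfun y (γ s)| ≤ ε * lam n)
    -- condition S(λₙ)
    (hS : ∀ ε > 0, ∀ ε' > 0, ∀ᶠ n : ℕ in atTop,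
      ∀ s ∈ Icc (0:ℝ) 1, ∀ u ∈ Icc (0:ℝ) 1, |s - u| ≤ δ n →
        (P {ω | ε * lam n < |X ω s - X ω u| / A n u ∧
            U u ((n : ℝ) / (k n : ℝ)) + τ * A n u < X ω u}).toReal
          ≤ ε' * (lam n * (k n : ℝ) / n)) :
    ∃ C : ℝ, ∀ᶠ n : ℕ in atTop,
      ∀ s ∈ Icc (0:ℝ) 1, ∀ u ∈ Icc (0:ℝ) 1, |s - u| ≤ δ n →
        A n u / A n s ≤ C := by
  have hUq : ∀ t y, U t y = ProbabilityTheory.tailQuantile (P.map fun ω => X ω t) y :=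
    fun t y => by rw [hU, ProbabilityTheory.tailQuantile_map_eq (hXmeas t)]; simp only [hF]; rfl
  obtain ⟨b, hb, c₀, hc₀, hgb⟩ :=
    (isCompact_Icc.image_of_continuousOn hγcont).exists_add_le_gfun (forall_mem_image.2 hτ)
  obtain ⟨Γ, hΓ⟩ := isCompact_Icc.exists_bound_of_continuousOn hγcont
  have hγΓ : ∀ t ∈ Icc (0 : ℝ) 1, -Γ ≤ γ t ∧ γ t ≤ Γ := fun t ht => abs_le.1 (hΓ t ht)
  set c := gfun (8 * b) (-Γ) - gfun (2 * b) (-Γ)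
  have hc : 0 < c := sub_pos.2 <| strictMonoOn_gfun _ (mem_Ioi.2 (by linarith))
    (mem_Ioi.2 (by linarith)) (by linarith)
  obtain ⟨ε, hε, hεlam⟩ :=
    exists_pos_forall_mul_le hlam_bdd (by positivity : 0 < min (c₀ / 2) (c / 6))
  obtain ⟨ε', hε', hε'lam⟩ :=
    exists_pos_forall_mul_le hlam_bdd (by positivity : 0 < 1 / (32 * b))
  refine ⟨(gfun (16 * b) Γ - gfun b Γ + c / 2) / (c / 2), ?_⟩
  filter_upwards [hM b (16 * b) (by linarith) (by linarith) ε hε, hS ε hε ε' hε',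
    eventually_ge_atTop 1] with n hMn hSn hn s hs u hu hsu
  obtain ⟨hk1, hkn⟩ := hk n hn
  exact div_le_of_level hXmeas hUq (by exact_mod_cast hk1) (by exact_mod_cast hkn) hb
    (hApos n s hs) (hApos n u hu) (hgb _ (mem_image_of_mem γ hs)) (hgb _ (mem_image_of_mem γ hu))
    hc₀ hc (hεlam n) (gfun_sub_gfun_mono (by linarith) (by linarith) (hγΓ u hu).1)
    (gfun_sub_gfun_mono hb.le (by linarith) (hγΓ s hs).2) (hMn s hs) (hMn u hu) (hε'lam n)
    (hSn u hu s hs (by rwa [abs_sub_comm])) (hSn s hs u hu hsu)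

/-- Lemma 1, eq. (3.2): under M(λₙ) and S(λₙ),
sup_{|s-t|≤δₙ} a_t(n/kₙ)/a_s(n/kₙ) = O(1). -/
theorem scale_ratio_bounded
    {Ω : Type*} [MeasurableSpace Ω] (P : Measure Ω) [IsProbabilityMeasure P]
    (X : Ω → ℝ → ℝ)
    (hXmeas : ∀ s, Measurable fun ω => X ω s)
    (hXcont : ∀ ω, ContinuousOn (X ω) (Icc 0 1))
    (γ : ℝ → ℝ) (hγcont : ContinuousOn γ (Icc 0 1))
    (F U : ℝ → ℝ → ℝ)
    (hF : ∀ s x, F s x = (P {ω | X ω s ≤ x}).toReal)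
    (hU : ∀ s y, U s y = sInf {x : ℝ | 1 - 1 / y ≤ F s x})
    (A : ℕ → ℝ → ℝ) (hApos : ∀ n, ∀ s ∈ Icc (0:ℝ) 1, 0 < A n s)
    (k : ℕ → ℕ) (hk : ∀ n, 1 ≤ n → 1 ≤ k n ∧ k n ≤ n)
    (hkinfty : Tendsto (fun n : ℕ => (k n : ℝ)) atTop atTop)
    (hkn0 : Tendsto (fun n : ℕ => (k n : ℝ) / n) atTop (𝓝 0))
    (lam : ℕ → ℝ) (hlam_pos : ∀ n, 0 < lam n) (hlam_bdd : ∃ C, ∀ n, lam n ≤ C)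
    (δ : ℕ → ℝ) (hδpos : ∀ n, 0 < δ n) (hδ0 : Tendsto δ atTop (𝓝 0))
    -- the constant τ of condition S(λₙ): τ < τ_max = inf_t 1/γ_t⁻
    (τ : ℝ) (hτ : ∀ s ∈ Icc (0:ℝ) 1, γ s < 0 → τ < -1 / γ s)
    -- condition M(λₙ)
    (hM : ∀ y₀ y₁ : ℝ, 0 < y₀ → y₀ < y₁ → ∀ ε > 0, ∀ᶠ n : ℕ in atTop,
      ∀ s ∈ Icc (0:ℝ) 1, ∀ y ∈ Icc y₀ y₁,
        |(U s (y * ((n : ℝ) / (k n : ℝ))) - U s ((n : ℝ) / (k n : ℝ))) / A n s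
          - gfun y (γ s)| ≤ ε * lam n)
    -- condition S(λₙ)
    (hS : ∀ ε > 0, ∀ ε' > 0, ∀ᶠ n : ℕ in atTop,
      ∀ s ∈ Icc (0:ℝ) 1, ∀ u ∈ Icc (0:ℝ) 1, |s - u| ≤ δ n →
        (P {ω | ε * lam n < |X ω s - X ω u| / A n u ∧
            U u ((n : ℝ) / (k n : ℝ)) + τ * A n u < X ω u}).toReal
          ≤ ε' * (lam n * (k n : ℝ) / n)) :
    ∃ C : ℝ, ∀ᶠ n : ℕ in atTop,
      ∀ s ∈ Icc (0:ℝ) 1, ∀ u ∈ Icc (0:ℝ) 1, |s - u| ≤ δ n →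
        A n u / A n s ≤ C :=
  scale_ratio_bounded_general P X hXmeas γ hγcont F U hF hU A hApos k hk lam hlam_bdd δ τ hτ hM hS
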